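/- The InfoNCE quantity with M samples is a lower bound on mutual information plus log M: for any critic function φ, E[(1/M) Σ_{p=1}^M (φ(y_p, z_p) − log((1/M) Σ_{q=1}^M exp(φ(y_p, z_q))))] ≤ I(y; z), where (y_p, z_p) are i.i.d. joint samples and in the inner sum z_q ranges over the batch (so q ≠ p gives independent pairs). -/

import Mathlib

/-!
Write `P s = ∏ j, p (s j)` for the law of the batch and, for a position `k`, let
`Q_k s = decoupledWeight p φ k s` be the weight in which the pair `s k` is instead drawn from the
product of the marginals and reweighted by `criticRatio φ s k = exp φ(y_k, z_k) / ((1/M) ∑_q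
exp φ(y_k, z_q))`. Subtracting the pointwise mutual information at `s k` from the log critic ratio
gives `log (Q_k s / P s)`, so `log x ≤ x - 1` bounds the `k`-th InfoNCE term minus `I(y; z)` by
`∑ s, Q_k s - 1`. Once `y_k` is independent of the batch `z`, the critic ratios are `M` times a
softmax over `k`; hence `∑ k, ∑ s, Q_k s = M` and the error terms cancel after averaging over `k`.
-/

open Finset

namespace CIA

variable {Y Z : Type*} [Fintype Y] [Fintype Z]

/-- Mutual information of a joint pmf on a product of finite spaces. -/
noncomputable def mutualInfo (p : Y × Z → ℝ) : ℝ :=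
  ∑ x : Y × Z, p x *
    Real.log (p x / ((∑ b : Z, p (x.1, b)) * (∑ a : Y, p (a, x.2))))

open Real

theorem mul_log_sub_log_div_le {a m t : ℝ} (ha : 0 ≤ a) (hm : 0 ≤ m) (ham : 0 < a → 0 < m)
    (ht : 0 < t) : a * (log t - log (a / m)) ≤ m * t - a := by
  rcases ha.eq_or_lt with rfl | ha
  · simpa using mul_nonneg hm ht.le
  have hm_pos := ham ha
  have hx : 0 < t / (a / m) := by positivity
  calc a * (log t - log (a / m)) = a * log (t / (a / m)) := by
        rw [log_div ht.ne' (by positivity)]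
    _ ≤ a * (t / (a / m) - 1) := mul_le_mul_of_nonneg_left (log_le_sub_one_of_pos hx) ha.le
    _ = m * t - a := by field_simp

section ProductSums

variable {ι α : Type*} [Fintype ι] [DecidableEq ι] [Fintype α]

omit [Fintype α] in
theorem prod_apply_update {β : Type*} (h : ι → β → ℝ) (F : ι → β) (b : β) (k : ι) :
    ∏ j, h j (Function.update F k b j) = (∏ j ∈ univ.erase k, h j (F j)) * h k b := by
  rw [← mul_prod_erase univ _ (mem_univ k), mul_comm, Function.update_self]
  congr 1
  exact prod_congr rfl fun j hj => by rw [Function.update_of_ne (ne_of_mem_erase hj)]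

theorem sum_prod_erase_mul (F : ι → α → ℝ) (g : α → ℝ) (k : ι) :
    ∑ x : ι → α, (∏ j ∈ univ.erase k, F j (x j)) * g (x k) =
      (∏ j ∈ univ.erase k, ∑ a, F j a) * ∑ a, g a := by
  rw [← prod_apply_update (fun _ f => ∑ a, f a) F g k, Fintype.prod_sum]
  exact sum_congr rfl fun x _ => (prod_apply_update (fun j f => f (x j)) F g k).symm

theorem sum_prod_eq_one (q : α → ℝ) (hq : ∑ a, q a = 1) : ∑ x : ι → α, ∏ j, q (x j) = 1 := by
  rw [← Fintype.prod_sum (fun _ a => q a), hq, prod_const_one]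

theorem sum_prod_mul_apply (q f : α → ℝ) (hq : ∑ a, q a = 1) (k : ι) :
    ∑ x : ι → α, (∏ j, q (x j)) * f (x k) = ∑ a, q a * f a := by
  have hsplit : ∀ x : ι → α,
      (∏ j, q (x j)) * f (x k) = (∏ j ∈ univ.erase k, q (x j)) * (q (x k) * f (x k)) := by
    intro x
    rw [← mul_prod_erase univ _ (mem_univ k)]
    ring
  simp_rw [hsplit]
  rw [sum_prod_erase_mul (fun _ => q) (fun a => q a * f a), hq, prod_const_one, one_mul]

theorem sum_sum_prod_mul_softmax [Nonempty ι] (q : α → ℝ) (hq : ∑ a, q a = 1) (ψ : α → ℝ) :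
    ∑ k, ∑ x : ι → α, (∏ j, q (x j)) * (exp (ψ (x k)) / ∑ i, exp (ψ (x i))) = 1 := by
  rw [sum_comm]
  calc _ = ∑ x : ι → α, ∏ j, q (x j) := by
        refine sum_congr rfl fun x _ => ?_
        rw [← mul_sum, ← sum_div, div_self (sum_pos (fun i _ => exp_pos _) univ_nonempty).ne',
          mul_one]
    _ = 1 := sum_prod_eq_one q hq

end ProductSums

noncomputable def fstMarginal (p : Y × Z → ℝ) (y : Y) : ℝ := ∑ b, p (y, b)

noncomputable def sndMarginal (p : Y × Z → ℝ) (z : Z) : ℝ := ∑ a, p (a, z)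

section Marginals

variable {p : Y × Z → ℝ}

theorem sum_fstMarginal (hp1 : ∑ x, p x = 1) : ∑ y, fstMarginal p y = 1 := by
  rw [← hp1, Fintype.sum_prod_type]
  rfl

theorem sum_sndMarginal (hp1 : ∑ x, p x = 1) : ∑ z, sndMarginal p z = 1 := by
  rw [← hp1, Fintype.sum_prod_type_right]
  rfl

omit [Fintype Y] in
theorem le_fstMarginal (hp0 : ∀ x, 0 ≤ p x) (x : Y × Z) : p x ≤ fstMarginal p x.1 :=
  single_le_sum (f := fun b => p (x.1, b)) (fun _ _ => hp0 _) (mem_univ x.2)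

omit [Fintype Z] in
theorem le_sndMarginal (hp0 : ∀ x, 0 ≤ p x) (x : Y × Z) : p x ≤ sndMarginal p x.2 :=
  single_le_sum (f := fun a => p (a, x.2)) (fun _ _ => hp0 _) (mem_univ x.1)

omit [Fintype Y] in
theorem fstMarginal_nonneg (hp0 : ∀ x, 0 ≤ p x) (y : Y) : 0 ≤ fstMarginal p y :=
  sum_nonneg fun _ _ => hp0 _

omit [Fintype Z] in
theorem sndMarginal_nonneg (hp0 : ∀ x, 0 ≤ p x) (z : Z) : 0 ≤ sndMarginal p z :=
  sum_nonneg fun _ _ => hp0 _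

theorem sum_prod_erase_mul_fst {ι : Type*} [Fintype ι] [DecidableEq ι]
    (h : (ι → Z) → Y → ℝ) (k : ι) :
    ∑ s : ι → Y × Z, (∏ j ∈ univ.erase k, p (s j)) * h (fun j => (s j).2) (s k).1 =
      ∑ z : ι → Z, (∏ j ∈ univ.erase k, sndMarginal p (z j)) * ∑ y, h z y := by
  rw [← (Equiv.arrowProdEquivProdArrow ι (fun _ => Y) (fun _ => Z)).symm.sum_comp,
    Fintype.sum_prod_type_right]
  exact sum_congr rfl fun z _ => sum_prod_erase_mul (fun j y => p (y, z j)) (h z) k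

end Marginals

noncomputable def criticRatio {M : ℕ} (φ : Y → Z → ℝ) (s : Fin M → Y × Z) (k : Fin M) : ℝ :=
  exp (φ (s k).1 (s k).2) / ((1 / (M : ℝ)) * ∑ q, exp (φ (s k).1 (s q).2))

omit [Fintype Y] [Fintype Z] in
theorem mean_exp_pos {M : ℕ} (φ : Y → Z → ℝ) (s : Fin M → Y × Z) (k : Fin M) :
    0 < (1 / (M : ℝ)) * ∑ q, exp (φ (s k).1 (s q).2) := by
  have hM : (0 : ℝ) < M := by exact_mod_cast k.pos
  have : Nonempty (Fin M) := ⟨k⟩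
  exact mul_pos (one_div_pos.mpr hM) (sum_pos (fun q _ => exp_pos _) univ_nonempty)

omit [Fintype Y] [Fintype Z] in
theorem criticRatio_pos {M : ℕ} (φ : Y → Z → ℝ) (s : Fin M → Y × Z) (k : Fin M) :
    0 < criticRatio φ s k :=
  div_pos (exp_pos _) (mean_exp_pos φ s k)

omit [Fintype Y] [Fintype Z] in
theorem log_criticRatio {M : ℕ} (φ : Y → Z → ℝ) (s : Fin M → Y × Z) (k : Fin M) :
    log (criticRatio φ s k) =
      φ (s k).1 (s k).2 - log ((1 / (M : ℝ)) * ∑ q, exp (φ (s k).1 (s q).2)) := by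
  rw [criticRatio, log_div (exp_pos _).ne' (mean_exp_pos φ s k).ne', log_exp]

omit [Fintype Y] in
theorem sum_sum_prod_mul_criticRatio {M : ℕ} (hM : 0 < M) (q : Z → ℝ) (hq : ∑ z, q z = 1)
    (φ : Y → Z → ℝ) (y : Y) :
    ∑ k : Fin M, ∑ z : Fin M → Z, (∏ j, q (z j)) * criticRatio φ (fun j => (y, z j)) k = M := by
  have : Nonempty (Fin M) := ⟨⟨0, hM⟩⟩
  have hratio : ∀ (z : Fin M → Z) k, criticRatio φ (fun j => (y, z j)) k =
      M * (exp (φ y (z k)) / ∑ i, exp (φ y (z i))) := by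
    intro z k
    rw [criticRatio, div_mul_eq_div_div_swap, one_div, div_inv_eq_mul, mul_comm]
  simp_rw [hratio, mul_left_comm _ (M : ℝ), ← mul_sum,
    sum_sum_prod_mul_softmax q hq (fun z => φ y z), mul_one]

noncomputable def decoupledWeight {M : ℕ} (p : Y × Z → ℝ) (φ : Y → Z → ℝ) (k : Fin M)
    (s : Fin M → Y × Z) : ℝ :=
  (∏ j ∈ univ.erase k, p (s j)) *
    (fstMarginal p (s k).1 * sndMarginal p (s k).2 * criticRatio φ s k)

theorem sum_decoupledWeight {M : ℕ} (p : Y × Z → ℝ) (φ : Y → Z → ℝ) (k : Fin M) :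
    ∑ s, decoupledWeight p φ k s = ∑ y, ∑ z : Fin M → Z,
      fstMarginal p y * ((∏ j, sndMarginal p (z j)) * criticRatio φ (fun j => (y, z j)) k) := by
  refine (sum_prod_erase_mul_fst (fun z y => fstMarginal p y * sndMarginal p (z k) *
    criticRatio φ (fun j => (y, z j)) k) k).trans ?_
  rw [sum_comm]
  refine sum_congr rfl fun z _ => ?_
  rw [mul_sum, ← mul_prod_erase univ _ (mem_univ k)]
  exact sum_congr rfl fun y _ => by ring

theorem sum_sum_decoupledWeight {M : ℕ} (hM : 0 < M) {p : Y × Z → ℝ} (hp1 : ∑ x, p x = 1)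
    (φ : Y → Z → ℝ) : ∑ k : Fin M, ∑ s, decoupledWeight p φ k s = M := by
  simp_rw [sum_decoupledWeight]
  rw [sum_comm]
  simp_rw [← mul_sum, sum_sum_prod_mul_criticRatio hM _ (sum_sndMarginal hp1)]
  rw [← sum_mul, sum_fstMarginal hp1, one_mul]

theorem sum_prod_mul_log_criticRatio_le {M : ℕ} {p : Y × Z → ℝ} (hp0 : ∀ x, 0 ≤ p x)
    (hp1 : ∑ x, p x = 1) (φ : Y → Z → ℝ) (k : Fin M) :
    ∑ s, (∏ j, p (s j)) * log (criticRatio φ s k) ≤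
      mutualInfo p + ∑ s, decoupledWeight p φ k s - 1 := by
  set L : Y × Z → ℝ := fun x => log (p x / (fstMarginal p x.1 * sndMarginal p x.2))
  have hI : mutualInfo p = ∑ s : Fin M → Y × Z, (∏ j, p (s j)) * L (s k) :=
    (sum_prod_mul_apply p L hp1 k).symm
  have hpointwise : ∀ s : Fin M → Y × Z,
      (∏ j, p (s j)) * log (criticRatio φ s k) - (∏ j, p (s j)) * L (s k) ≤
        decoupledWeight p φ k s - ∏ j, p (s j) := by
    intro s
    have hlog := mul_log_sub_log_div_le (hp0 (s k))
      (mul_nonneg (fstMarginal_nonneg hp0 _) (sndMarginal_nonneg hp0 _))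
      (fun ha => mul_pos (ha.trans_le (le_fstMarginal hp0 _)) (ha.trans_le (le_sndMarginal hp0 _)))
      (criticRatio_pos φ s k)
    have hrest : 0 ≤ ∏ j ∈ univ.erase k, p (s j) := prod_nonneg fun _ _ => hp0 _
    rw [decoupledWeight, ← mul_prod_erase univ _ (mem_univ k)]
    linear_combination mul_le_mul_of_nonneg_left hlog hrest
  have hsum := sum_le_sum fun s (_ : s ∈ univ) => hpointwise s
  rw [sum_sub_distrib, sum_sub_distrib, ← hI, sum_prod_eq_one p hp1] at hsum
  linarith

/-- InfoNCE bound: for any critic `φ` and batch size `M`, the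
expectation (over `M` i.i.d. samples `(y_p, z_p)` from the joint distribution) of
`(1/M) Σ_p [φ(y_p, z_p) − log((1/M) Σ_q exp φ(y_p, z_q))]` is at most the mutual
information `I(y; z)`. -/
theorem infoNCE_le_mutualInfo (p : Y × Z → ℝ) (M : ℕ) (φ : Y → Z → ℝ)
    (hp0 : ∀ x, 0 ≤ p x) (hp1 : ∑ x : Y × Z, p x = 1) (hM : 0 < M) :
    (∑ s : Fin M → Y × Z, (∏ k : Fin M, p (s k)) *
        ((1 / (M : ℝ)) * ∑ k : Fin M,
          (φ (s k).1 (s k).2 -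
            Real.log ((1 / (M : ℝ)) * ∑ q : Fin M, Real.exp (φ (s k).1 (s q).2))))) ≤
      mutualInfo p := by
  calc _ = 1 / (M : ℝ) * ∑ k : Fin M, ∑ s, (∏ j, p (s j)) * log (criticRatio φ s k) := by
        simp_rw [log_criticRatio, mul_sum]
        rw [sum_comm]
        exact sum_congr rfl fun k _ => sum_congr rfl fun s _ => by ring
    _ ≤ 1 / (M : ℝ) * ∑ k : Fin M, (mutualInfo p + ∑ s, decoupledWeight p φ k s - 1) := by
        gcongr with k
        exact sum_prod_mul_log_criticRatio_le hp0 hp1 φ k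
    _ = mutualInfo p := by
        rw [sum_sub_distrib, sum_add_distrib, sum_sum_decoupledWeight hM hp1]
        simp only [sum_const, card_univ, Fintype.card_fin, nsmul_eq_mul, mul_one,
          add_sub_cancel_right]
        field_simp

end CIA
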